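/- On the Grushin plane, with $f:(0,\infty)\to\mathbb{R}$ smooth and $\rho=(x^4+4y^2)^{1/4}$, the symmetrized horizontal Hessian of $f\circ\rho$ satisfies $(D^2_{\mathcal{X}}f(\rho))^* = \frac{f'(\rho)}{\rho^3}\begin{pmatrix}3x^2 & y\\ y & 2x^2\end{pmatrix} + \big(f''(\rho)-\frac{3f'(\rho)}{\rho}\big)D_{\mathcal{X}}\rho\otimes D_{\mathcal{X}}\rho$ at every point with $\rho\neq0$. -/

import Mathlib

noncomputable section

/-- Grushin homogeneous norm `ρ(x,y) = (x⁴ + 4y²)^{1/4}` on the plane. -/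
def rhoG (x y : ℝ) : ℝ := (x ^ 4 + 4 * y ^ 2) ^ (1/4 : ℝ)

/-- Derivative along the Grushin field `X = ∂ₓ`. -/
def GX (u : ℝ → ℝ → ℝ) (x y : ℝ) : ℝ := deriv (fun s => u s y) x

/-- Derivative along the Grushin field `Y = x ∂_y`. -/
def GY (u : ℝ → ℝ → ℝ) (x y : ℝ) : ℝ := x * deriv (fun s => u x s) y

/-- Symmetrized horizontal Hessian `((D²_𝒳u)*)ᵢⱼ = (ZᵢZⱼu + ZⱼZᵢu)/2`, `Z₁=X`, `Z₂=Y`. -/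
def HessG (u : ℝ → ℝ → ℝ) (x y : ℝ) : Matrix (Fin 2) (Fin 2) ℝ :=
  !![GX (GX u) x y, (GX (GY u) x y + GY (GX u) x y) / 2;
     (GX (GY u) x y + GY (GX u) x y) / 2, GY (GY u) x y]

lemma hasDerivAt_gx (x y c : ℝ) (hg : 0 < x ^ 4 + 4 * y ^ 2) :
    HasDerivAt (fun s : ℝ => (s ^ 4 + 4 * y ^ 2) ^ c)
      (c * (x ^ 4 + 4 * y ^ 2) ^ (c - 1) * (4 * x ^ 3)) x := by
  have h1 : HasDerivAt (fun s : ℝ => s ^ 4 + 4 * y ^ 2) (4 * x ^ 3) x := by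
    simpa using ((hasDerivAt_pow 4 x).add_const (4 * y ^ 2))
  have h2 := Real.hasDerivAt_rpow_const (x := x ^ 4 + 4 * y ^ 2) (p := c) (Or.inl hg.ne')
  exact h2.comp x h1

lemma hasDerivAt_gy (x y c : ℝ) (hg : 0 < x ^ 4 + 4 * y ^ 2) :
    HasDerivAt (fun t : ℝ => (x ^ 4 + 4 * t ^ 2) ^ c)
      (c * (x ^ 4 + 4 * y ^ 2) ^ (c - 1) * (8 * y)) y := by
  have h1 : HasDerivAt (fun t : ℝ => x ^ 4 + 4 * t ^ 2) (8 * y) y := by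
    have := ((hasDerivAt_pow 2 y).const_mul 4).const_add (x ^ 4)
    norm_num at this
    exact (this.const_add (x ^ 4)).congr_deriv (by ring)
  have h2 := Real.hasDerivAt_rpow_const (x := x ^ 4 + 4 * y ^ 2) (p := c) (Or.inl hg.ne')
  exact h2.comp y h1

lemma hasDerivAt_rho_x (x y : ℝ) (hg : 0 < x ^ 4 + 4 * y ^ 2) :
    HasDerivAt (fun s => rhoG s y) (x ^ 3 * (x ^ 4 + 4 * y ^ 2) ^ (-(3/4) : ℝ)) x := by
  have := hasDerivAt_gx x y (1/4) hg
  unfold rhoG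
  convert this using 1
  norm_num
  ring

lemma hasDerivAt_rho_y (x y : ℝ) (hg : 0 < x ^ 4 + 4 * y ^ 2) :
    HasDerivAt (fun t => rhoG x t) (2 * y * (x ^ 4 + 4 * y ^ 2) ^ (-(3/4) : ℝ)) y := by
  have := hasDerivAt_gy x y (1/4) hg
  unfold rhoG
  convert this using 1
  norm_num
  ring

lemma hasDerivAt_G_x (x y : ℝ) (hg : 0 < x ^ 4 + 4 * y ^ 2) :
    HasDerivAt (fun s : ℝ => (s ^ 4 + 4 * y ^ 2) ^ (-(3/4) : ℝ))
      (-3 * x ^ 3 * (x ^ 4 + 4 * y ^ 2) ^ (-(7/4) : ℝ)) x := by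
  have := hasDerivAt_gx x y (-(3/4)) hg
  convert this using 1
  norm_num
  ring

lemma hasDerivAt_G_y (x y : ℝ) (hg : 0 < x ^ 4 + 4 * y ^ 2) :
    HasDerivAt (fun t : ℝ => (x ^ 4 + 4 * t ^ 2) ^ (-(3/4) : ℝ))
      (-6 * y * (x ^ 4 + 4 * y ^ 2) ^ (-(7/4) : ℝ)) y := by
  have := hasDerivAt_gy x y (-(3/4)) hg
  convert this using 1
  norm_num
  ring

set_option maxHeartbeats 1000000 in
/-- for smooth `f : (0,∞) → ℝ`, at points with `ρ ≠ 0`,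
`(D²_𝒳 f(ρ))* = (f'(ρ)/ρ³)·[[3x²,y],[y,2x²]] + (f''(ρ) - 3f'(ρ)/ρ)·D_𝒳ρ ⊗ D_𝒳ρ`,
with `D_𝒳ρ = (x³/ρ³, 2xy/ρ³)`. -/
theorem stmt10 (f : ℝ → ℝ) (hf : ContDiffOn ℝ (⊤ : ℕ∞) f (Set.Ioi 0))
    (x y : ℝ) (hρ : rhoG x y ≠ 0) :
    HessG (fun a b => f (rhoG a b)) x y =
      (deriv f (rhoG x y) / rhoG x y ^ 3) • !![3 * x ^ 2, y; y, 2 * x ^ 2] +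
      (deriv (deriv f) (rhoG x y) - 3 * deriv f (rhoG x y) / rhoG x y) •
        !![(x ^ 3 / rhoG x y ^ 3) ^ 2, (x ^ 3 / rhoG x y ^ 3) * (2 * x * y / rhoG x y ^ 3);
           (2 * x * y / rhoG x y ^ 3) * (x ^ 3 / rhoG x y ^ 3),
             (2 * x * y / rhoG x y ^ 3) ^ 2] := by
  have hgnn : (0:ℝ) ≤ x ^ 4 + 4 * y ^ 2 := by positivity
  have hg : 0 < x ^ 4 + 4 * y ^ 2 := by
    rcases hgnn.lt_or_eq with h | h
    · exact h
    · exfalso; apply hρ; rw [rhoG, ← h, Real.zero_rpow (by norm_num)]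
  have hA : 0 < rhoG x y := by rw [rhoG]; positivity
  -- derivatives of f
  have hf1 : ∀ r : ℝ, 0 < r → HasDerivAt f (deriv f r) r := fun r hr =>
    ((hf.differentiableOn (by simp)).differentiableAt (Ioi_mem_nhds hr)).hasDerivAt
  have hfd : ContDiffOn ℝ (⊤ : ℕ∞) (deriv f) (Set.Ioi 0) := hf.deriv_of_isOpen isOpen_Ioi (by simp)
  have hf2 : ∀ r : ℝ, 0 < r → HasDerivAt (deriv f) (deriv (deriv f) r) r := fun r hr =>
    ((hfd.differentiableOn (by simp)).differentiableAt (Ioi_mem_nhds hr)).hasDerivAt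
  have hrpos : ∀ a b : ℝ, 0 < a ^ 4 + 4 * b ^ 2 → 0 < rhoG a b := by
    intro a b h; rw [rhoG]; positivity
  -- first derivatives
  have hGXu : ∀ a b : ℝ, 0 < a ^ 4 + 4 * b ^ 2 →
      GX (fun a b => f (rhoG a b)) a b =
        deriv f (rhoG a b) * (a ^ 3 * (a ^ 4 + 4 * b ^ 2) ^ (-(3/4) : ℝ)) := by
    intro a b h
    exact ((hf1 (rhoG a b) (hrpos a b h)).comp a (hasDerivAt_rho_x a b h)).deriv
  have hGYu : ∀ a b : ℝ, 0 < a ^ 4 + 4 * b ^ 2 →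
      GY (fun a b => f (rhoG a b)) a b =
        a * (deriv f (rhoG a b) * (2 * b * (a ^ 4 + 4 * b ^ 2) ^ (-(3/4) : ℝ))) := by
    intro a b h
    have := ((hf1 (rhoG a b) (hrpos a b h)).comp b (hasDerivAt_rho_y a b h)).deriv
    rw [GY]
    exact congrArg (fun z => a * z) this
  -- open sets
  have hUx : ∀ b : ℝ, IsOpen {s : ℝ | 0 < s ^ 4 + 4 * b ^ 2} :=
    fun b => isOpen_lt continuous_const (by continuity)
  have hUy : ∀ a : ℝ, IsOpen {t : ℝ | 0 < a ^ 4 + 4 * t ^ 2} :=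
    fun a => isOpen_lt continuous_const (by continuity)
  -- second derivative building blocks
  have hPx : HasDerivAt (fun s => deriv f (rhoG s y))
      (deriv (deriv f) (rhoG x y) * (x ^ 3 * (x ^ 4 + 4 * y ^ 2) ^ (-(3/4) : ℝ))) x :=
    HasDerivAt.comp (h₂ := deriv f) x (hf2 (rhoG x y) hA) (hasDerivAt_rho_x x y hg)
  have hPy : HasDerivAt (fun t => deriv f (rhoG x t))
      (deriv (deriv f) (rhoG x y) * (2 * y * (x ^ 4 + 4 * y ^ 2) ^ (-(3/4) : ℝ))) y :=
    HasDerivAt.comp (h₂ := deriv f) y (hf2 (rhoG x y) hA) (hasDerivAt_rho_y x y hg)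
  set P := deriv f (rhoG x y) with hP
  set Q := deriv (deriv f) (rhoG x y) with hQ
  set G3 := (x ^ 4 + 4 * y ^ 2) ^ (-(3/4) : ℝ) with hG3
  set G7 := (x ^ 4 + 4 * y ^ 2) ^ (-(7/4) : ℝ) with hG7
  -- entry (0,0): X X u
  have E11 : GX (GX (fun a b => f (rhoG a b))) x y =
      Q * (x ^ 3 * G3) * (x ^ 3 * G3) + P * (3 * x ^ 2 * G3 + x ^ 3 * (-3 * x ^ 3 * G7)) := by
    have hev : (fun s => GX (fun a b => f (rhoG a b)) s y) =ᶠ[nhds x]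
        (fun s => deriv f (rhoG s y) * (s ^ 3 * (s ^ 4 + 4 * y ^ 2) ^ (-(3/4) : ℝ))) :=
      Filter.eventually_of_mem ((hUx y).mem_nhds hg) (fun s hs => hGXu s y hs)
    have H := hPx.fun_mul ((hasDerivAt_pow 3 x).fun_mul (hasDerivAt_G_x x y hg))
    rw [show GX (GX (fun a b => f (rhoG a b))) x y
        = deriv (fun s => GX (fun a b => f (rhoG a b)) s y) x from rfl, hev.deriv_eq]
    rw [H.deriv]
    try push_cast
    try ring
  -- entry: Y X u
  have E21 : GY (GX (fun a b => f (rhoG a b))) x y =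
      x * (Q * (2 * y * G3) * (x ^ 3 * G3) + P * (x ^ 3 * (-6 * y * G7))) := by
    have hev : (fun t => GX (fun a b => f (rhoG a b)) x t) =ᶠ[nhds y]
        (fun t => deriv f (rhoG x t) * (x ^ 3 * (x ^ 4 + 4 * t ^ 2) ^ (-(3/4) : ℝ))) :=
      Filter.eventually_of_mem ((hUy x).mem_nhds hg) (fun t ht => hGXu x t ht)
    have H := hPy.fun_mul ((hasDerivAt_G_y x y hg).const_mul (x ^ 3))
    rw [show GY (GX (fun a b => f (rhoG a b))) x y
        = x * deriv (fun t => GX (fun a b => f (rhoG a b)) x t) y from rfl, hev.deriv_eq]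
    rw [H.deriv]
    try ring
  -- entry: X Y u
  have E12 : GX (GY (fun a b => f (rhoG a b))) x y =
      1 * (P * (2 * y * G3)) + x * (Q * (x ^ 3 * G3) * (2 * y * G3) + P * (2 * y * (-3 * x ^ 3 * G7))) := by
    have hev : (fun s => GY (fun a b => f (rhoG a b)) s y) =ᶠ[nhds x]
        (fun s => s * (deriv f (rhoG s y) * (2 * y * (s ^ 4 + 4 * y ^ 2) ^ (-(3/4) : ℝ)))) :=
      Filter.eventually_of_mem ((hUx y).mem_nhds hg) (fun s hs => hGYu s y hs)
    have H := (hasDerivAt_id' (x := x)).fun_mul (hPx.fun_mul ((hasDerivAt_G_x x y hg).const_mul (2 * y)))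
    rw [show GX (GY (fun a b => f (rhoG a b))) x y
        = deriv (fun s => GY (fun a b => f (rhoG a b)) s y) x from rfl, hev.deriv_eq]
    rw [H.deriv]
    try ring
  -- entry: Y Y u
  have E22 : GY (GY (fun a b => f (rhoG a b))) x y =
      x * (x * (Q * (2 * y * G3) * (2 * y * G3)
        + P * (2 * 1 * G3 + 2 * y * (-6 * y * G7)))) := by
    have hev : (fun t => GY (fun a b => f (rhoG a b)) x t) =ᶠ[nhds y]
        (fun t => x * (deriv f (rhoG x t) * (2 * t * (x ^ 4 + 4 * t ^ 2) ^ (-(3/4) : ℝ)))) :=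
      Filter.eventually_of_mem ((hUy x).mem_nhds hg) (fun t ht => hGYu x t ht)
    have H := ((hPy.fun_mul (((hasDerivAt_id' (x := y)).const_mul 2).fun_mul (hasDerivAt_G_y x y hg)))).const_mul x
    rw [show GY (GY (fun a b => f (rhoG a b))) x y
        = x * deriv (fun t => GY (fun a b => f (rhoG a b)) x t) y from rfl, hev.deriv_eq]
    rw [H.deriv]
    try ring
  -- rpow to rho-powers
  have e3 : G3 = (rhoG x y ^ 3)⁻¹ := by
    rw [hG3, rhoG, ← Real.rpow_natCast _ 3, ← Real.rpow_mul hgnn, ← Real.rpow_neg hgnn]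
    norm_num
  have e7 : G7 = (rhoG x y ^ 7)⁻¹ := by
    rw [hG7, rhoG, ← Real.rpow_natCast _ 7, ← Real.rpow_mul hgnn, ← Real.rpow_neg hgnn]
    norm_num
  rw [HessG, E11, E12, E21, E22, e3, e7]
  clear_value P Q
  clear hPx hPy hGXu hGYu E11 E12 E21 E22 e3 e7 hG3 hG7 hP hQ hρ
  generalize hAx : rhoG x y = A at hA ⊢
  have hA0 : A ≠ 0 := ne_of_gt hA
  ext i j
  fin_cases i <;> fin_cases j <;>
    simp only [Matrix.add_apply, Matrix.smul_apply, Matrix.cons_val', Matrix.cons_val_zero,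
      Matrix.cons_val_one, Matrix.head_cons, Matrix.head_fin_const, Matrix.empty_val',
      Matrix.cons_val_fin_one, smul_eq_mul, Matrix.of_apply, Fin.mk_one, Fin.zero_eta] <;>
    field_simp <;>
    ring
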